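/- arXiv:1710.11606 — 3 statements merged into one kernel-verified Lean document; each statement's English description precedes it below -/
import Mathlib

section
/- Φ is infinitely differentiable and for every integer k ≥ 1 and every real x, |Φ^{(k)}(x)| ≤ exp((3k/2)·log(3k/2)), where Φ^{(k)} denotes the k-th derivative of Φ. -/
/-- Φ(x) = √e · ∫_{−∞}^x exp(−t²/2) dt. -/
noncomputable def Phi (x : ℝ) : ℝ :=
  Real.sqrt (Real.exp 1) * ∫ t in Set.Iic x, Real.exp (-t^2/2)

open Real MeasureTheory Polynomial Finset Nat

noncomputable def gs (t : ℝ) : ℝ := Real.exp (-(t^2/2))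

lemma gs_integrable : Integrable gs := by
  have h := integrable_exp_neg_mul_sq (b := (2:ℝ)⁻¹) (by norm_num)
  refine h.congr ?_
  filter_upwards with t
  unfold gs; ring_nf

lemma gs_cont : Continuous gs := by unfold gs; fun_prop

/-- coefficient of x^(2m) in the gaussian's power series -/
noncomputable def dcoef (m : ℕ) : ℝ := (-2⁻¹)^m / (m)!

/-- coefficients of the antiderivative of the gaussian -/
noncomputable def ccoef (n : ℕ) : ℝ :=
  if n % 2 = 1 then dcoef ((n-1)/2) / n else 0

lemma ccoef_odd (m : ℕ) : ccoef (2*m+1) = dcoef m / (2*m+1) := by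
  have h1 : (2*m+1) % 2 = 1 := by omega
  have h2 : (2*m+1-1)/2 = m := by omega
  simp [ccoef, h1, h2]

lemma ccoef_even (n : ℕ) (h : n % 2 ≠ 1) : ccoef n = 0 := by simp [ccoef, h]

lemma abs_dcoef (m : ℕ) : |dcoef m| = (2⁻¹)^m / (m)! := by
  rw [dcoef, abs_div, abs_pow]
  simp [abs_of_nonneg, Nat.cast_nonneg]

lemma odd_inj : Function.Injective (fun m : ℕ => 2*m+1) := by
  intro a b h
  dsimp only at h
  omega

lemma odd_range {u : ℕ → ℝ} (h : ∀ n, n % 2 ≠ 1 → u n = 0) :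
    ∀ n ∉ Set.range (fun m : ℕ => 2*m+1), u n = 0 := by
  intro n hn
  refine h n fun hodd => hn ⟨(n-1)/2, by dsimp only; omega⟩

lemma summable_aux1 (R : ℝ) (hR : 0 ≤ R) :
    Summable (fun n : ℕ => |ccoef n| * ((n:ℝ) * R^(n-1))) := by
  set u : ℕ → ℝ := fun n => |ccoef n| * ((n:ℝ) * R^(n-1)) with hu
  have hsupp : ∀ n ∉ Set.range (fun m : ℕ => 2*m+1), u n = 0 :=
    odd_range (fun n h => by simp [hu, ccoef_even n h])
  rw [← Function.Injective.summable_iff odd_inj hsupp]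
  have key : ∀ m : ℕ, (u ∘ fun m : ℕ => 2*m+1) m = (R^2/2)^m / (m)! := by
    intro m
    have h1 : ((2*m+1:ℕ):ℝ) ≠ 0 := by positivity
    simp only [Function.comp, hu, ccoef_odd, abs_div, abs_dcoef]
    have habs : |2*(m:ℝ)+1| = 2*(m:ℝ)+1 := abs_of_nonneg (by positivity)
    rw [habs]
    push_cast
    field_simp
    rw [pow_mul]
    ring
  exact Summable.congr (Real.summable_pow_div_factorial (R^2/2)) (fun m => (key m).symm)

lemma summable_aux2 (R : ℝ) (hR : 0 ≤ R) :
    Summable (fun n : ℕ => |ccoef n| * R^n) := by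
  set u : ℕ → ℝ := fun n => |ccoef n| * R^n with hu
  have hsupp : ∀ n ∉ Set.range (fun m : ℕ => 2*m+1), u n = 0 :=
    odd_range (fun n h => by simp [hu, ccoef_even n h])
  rw [← Function.Injective.summable_iff odd_inj hsupp]
  refine Summable.of_nonneg_of_le (fun m => by
    simp only [Function.comp, hu]; positivity) ?_
    ((Real.summable_pow_div_factorial (R^2/2)).mul_left R)
  intro m
  have h1 : (1:ℝ) ≤ ((2*m+1:ℕ):ℝ) := by exact_mod_cast Nat.one_le_iff_ne_zero.2 (by omega)
  simp only [Function.comp, hu, ccoef_odd, abs_div, abs_dcoef]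
  have habs : |2*(m:ℝ)+1| = 2*(m:ℝ)+1 := abs_of_nonneg (by positivity)
  rw [habs]
  push_cast
  have h1' : (1:ℝ) ≤ 2*(m:ℝ)+1 := by push_cast at h1 ⊢; linarith
  have hle : (2⁻¹:ℝ)^m / (m)! / (2*(m:ℝ)+1) ≤ (2⁻¹:ℝ)^m / (m)! :=
    div_le_self (by positivity) h1'
  calc (2⁻¹:ℝ)^m / (m)! / (2*(m:ℝ)+1) * R^(2*m+1)
      ≤ (2⁻¹:ℝ)^m / (m)! * R^(2*m+1) :=
        mul_le_mul_of_nonneg_right hle (by positivity)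
    _ = R * ((R^2/2)^m / (m)!) := by
        rw [pow_succ, pow_mul]
        field_simp
        ring

noncomputable def Gfun : ℝ → ℝ := FormalMultilinearSeries.ofScalarsSum ccoef

lemma Gfun_eq (x : ℝ) : Gfun x = ∑' n : ℕ, ccoef n * x ^ n := by
  rw [Gfun, FormalMultilinearSeries.ofScalars_sum_eq]
  simp [smul_eq_mul]

lemma Gfun_radius : (FormalMultilinearSeries.ofScalars ℝ ccoef).radius = ⊤ := by
  apply FormalMultilinearSeries.radius_eq_top_of_summable_norm
  intro r
  have := summable_aux2 (r:ℝ) r.coe_nonneg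
  refine this.congr fun n => ?_
  rw [FormalMultilinearSeries.ofScalars_norm]
  simp [Real.norm_eq_abs]

lemma Gfun_analytic : AnalyticOnNhd ℝ Gfun Set.univ := by
  have h := (FormalMultilinearSeries.ofScalars ℝ ccoef).hasFPowerSeriesOnBall
    (by rw [Gfun_radius]; exact ENNReal.zero_lt_top)
  rw [Gfun_radius] at h
  intro x _
  exact h.analyticAt_of_mem (by simp [edist_lt_top])

lemma Gfun_hasDerivAt (x : ℝ) : HasDerivAt Gfun (gs x) x := by
  set R : ℝ := |x| + 1 with hR
  have hR0 : 0 < R := by positivity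
  have hball : x ∈ Metric.ball (0:ℝ) R := by
    rw [Metric.mem_ball, Real.dist_eq, sub_zero]
    linarith [abs_nonneg x]
  have key : HasDerivAt (fun z => ∑' n : ℕ, ccoef n * z ^ n)
      (∑' n : ℕ, ccoef n * ((n:ℝ) * x ^ (n-1))) x := by
    apply hasDerivAt_tsum_of_isPreconnected (summable_aux1 R hR0.le)
      Metric.isOpen_ball (convex_ball (0:ℝ) R).isPreconnected
      (g := fun n z => ccoef n * z ^ n)
      (g' := fun n z => ccoef n * ((n:ℝ) * z ^ (n-1)))
      (fun n y _ => (hasDerivAt_pow n y).const_mul _)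
      ?_ (Metric.mem_ball_self hR0) ?_ hball
    · intro n y hy
      rw [Real.norm_eq_abs, abs_mul]
      apply mul_le_mul_of_nonneg_left _ (abs_nonneg _)
      rw [abs_mul, abs_pow]
      have hyR : |y| ≤ R := by
        rw [Metric.mem_ball, Real.dist_eq, sub_zero] at hy; linarith
      have : |y|^(n-1) ≤ R^(n-1) := pow_le_pow_left₀ (abs_nonneg _) hyR _
      calc |(n:ℝ)| * |y|^(n-1) = (n:ℝ) * |y|^(n-1) := by
            rw [abs_of_nonneg (Nat.cast_nonneg n)]
        _ ≤ (n:ℝ) * R^(n-1) := by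
            apply mul_le_mul_of_nonneg_left this (Nat.cast_nonneg n)
    · apply summable_of_ne_finset_zero (s := {0})
      intro n hn
      simp at hn
      simp [zero_pow hn]
  have hsum : (∑' n : ℕ, ccoef n * ((n:ℝ) * x ^ (n-1))) = gs x := by
    set v : ℕ → ℝ := fun n => ccoef n * ((n:ℝ) * x ^ (n-1)) with hv
    have hsupp : ∀ n ∉ Set.range (fun m : ℕ => 2*m+1), v n = 0 :=
      odd_range (fun n h => by simp [hv, ccoef_even n h])
    rw [← Function.Injective.tsum_eq odd_inj (Function.support_subset_iff'.2 hsupp)]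
    have key2 : ∀ m : ℕ, v (2*m+1) = (-(x^2/2))^m / (m)! := by
      intro m
      have h1 : (2*(m:ℝ)+1) ≠ 0 := by positivity
      simp only [hv, ccoef_odd, dcoef]
      have h2 : (2*m+1) - 1 = 2*m := by omega
      rw [h2]
      push_cast
      field_simp
      rw [pow_mul]
      ring
    calc ∑' m : ℕ, v (2*m+1) = ∑' m : ℕ, (-(x^2/2))^m / (m)! := tsum_congr key2
      _ = gs x := by
          rw [gs, Real.exp_eq_exp_ℝ, NormedSpace.exp_eq_tsum_div]
  have : HasDerivAt (fun z => ∑' n : ℕ, ccoef n * z ^ n) (gs x) x := hsum ▸ key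
  exact this.congr_of_eventuallyEq (by filter_upwards with y; rw [Gfun_eq])

lemma Gfun_zero : Gfun 0 = 0 := by
  rw [Gfun, FormalMultilinearSeries.ofScalarsSum_zero]
  simp [ccoef]

lemma integral_Iic_eq (x : ℝ) : (∫ t in Set.Iic x, Real.exp (-t^2/2))
    = (∫ t in Set.Iic (0:ℝ), gs t) + Gfun x := by
  have h := intervalIntegral.integral_Iic_sub_Iic (μ := volume) (f := gs)
    (gs_integrable.integrableOn) (gs_integrable.integrableOn) (a := (0:ℝ)) (b := x)
  have h2 : (∫ t in (0:ℝ)..x, gs t) = Gfun x - Gfun 0 := by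
    apply intervalIntegral.integral_eq_sub_of_hasDerivAt
      (fun t _ => Gfun_hasDerivAt t)
    exact gs_cont.intervalIntegrable 0 x
  have hg : (∫ t in Set.Iic x, Real.exp (-t^2/2)) = ∫ t in Set.Iic x, gs t := by
    refine setIntegral_congr_fun measurableSet_Iic (fun t _ => ?_)
    simp [gs, neg_div]
  rw [hg]
  rw [h2, Gfun_zero] at h
  linarith

lemma Phi_eq : Phi = fun x => (Real.sqrt (Real.exp 1) * ∫ t in Set.Iic (0:ℝ), gs t)
    + Real.sqrt (Real.exp 1) * Gfun x := by
  funext x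
  rw [Phi, integral_Iic_eq]
  ring

lemma Phi_analytic : AnalyticOnNhd ℝ Phi Set.univ := by
  rw [Phi_eq]
  exact analyticOnNhd_const.add (analyticOnNhd_const.mul Gfun_analytic)

lemma Phi_contDiff : ContDiff ℝ (⊤ : ℕ∞) Phi :=
  (contDiff_omega_iff_analyticOnNhd.2 Phi_analytic).of_le le_top

lemma Phi_hasDerivAt (x : ℝ) :
    HasDerivAt Phi (Real.sqrt (Real.exp 1) * gs x) x := by
  rw [Phi_eq]
  exact ((Gfun_hasDerivAt x).const_mul _).const_add _

lemma deriv_Phi : deriv Phi = fun x => Real.sqrt (Real.exp 1) * gs x :=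
  funext fun x => (Phi_hasDerivAt x).deriv

lemma gs_contDiff (n : ℕ) : ContDiff ℝ n gs := by
  have h : ContDiff ℝ n (fun t : ℝ => -(t^2/2)) :=
    (ContDiff.div_const (contDiff_id.pow 2) 2).neg
  exact h.exp

lemma iteratedDeriv_Phi (n : ℕ) (x : ℝ) :
    iteratedDeriv (n+1) Phi x
      = Real.sqrt (Real.exp 1) *
        ((-1:ℝ)^n * aeval x (hermite n) * Real.exp (-(x^2/2))) := by
  rw [iteratedDeriv_succ', deriv_Phi]
  have hsmul : (fun x => Real.sqrt (Real.exp 1) * gs x)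
      = Real.sqrt (Real.exp 1) • gs := by
    funext y; simp [smul_eq_mul]
  have h1 : iteratedDeriv n (fun x => Real.sqrt (Real.exp 1) * gs x) x
      = Real.sqrt (Real.exp 1) * iteratedDeriv n gs x := by
    rw [hsmul, iteratedDeriv_eq_iteratedFDeriv, iteratedDeriv_eq_iteratedFDeriv]
    rw [iteratedFDeriv_const_smul_apply (gs_contDiff n).contDiffAt]
    simp [smul_eq_mul]
  rw [h1]
  congr 1
  have h2 : iteratedDeriv n gs x = deriv^[n] (fun y => Real.exp (-(y^2/2))) x := by
    rw [iteratedDeriv_eq_iterate]; rfl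
  rw [h2, Polynomial.deriv_gaussian_eq_hermite_mul_gaussian]

lemma weight_le (k : ℕ) (x : ℝ) : |x|^k * Real.exp (-(x^2/2)) ≤ (k)! := by
  have hA : (0:ℝ) ≤ |x|^k * Real.exp (-(x^2/2)) := by positivity
  have hk : (0:ℝ) < (k)! := by exact_mod_cast Nat.factorial_pos k
  rw [← pow_le_pow_iff_left₀ hA hk.le (two_ne_zero)]
  have hterm : (x^2)^k / (k)! ≤ Real.exp (x^2) := by
    have := Real.sum_le_exp_of_nonneg (sq_nonneg x) (k+1)
    refine le_trans ?_ this
    exact Finset.single_le_sum (f := fun i => (x^2)^i / (i)!)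
      (fun i _ => by positivity) (Finset.self_mem_range_succ k)
  have h1 : (|x|^k * Real.exp (-(x^2/2)))^2 = (x^2)^k * Real.exp (-(x^2)) := by
    rw [mul_pow, ← Real.exp_nat_mul, ← pow_mul, ← pow_mul, mul_comm k 2, pow_mul, sq_abs,
      ← pow_mul, mul_comm 2 k]
    ring_nf
  rw [h1]
  have h2 : (x^2)^k ≤ (k)! * Real.exp (x^2) := by
    rw [div_le_iff₀ hk] at hterm
    linarith [hterm]
  calc (x^2)^k * Real.exp (-(x^2)) ≤ ((k)! * Real.exp (x^2)) * Real.exp (-(x^2)) :=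
        mul_le_mul_of_nonneg_right h2 (Real.exp_nonneg _)
    _ = (k)! := by rw [mul_assoc, ← Real.exp_add]; simp
    _ ≤ ((k)!:ℝ)^2 := by
        have h3 : (1:ℝ) ≤ (k)! := by exact_mod_cast Nat.one_le_iff_ne_zero.2 (Nat.factorial_pos k).ne'
        nlinarith

lemma coeff_bd (n k : ℕ) : ((hermite n).coeff k).natAbs * (k)! ≤ (n)! := by
  rcases le_or_gt k n with hkn | hkn
  · rw [coeff_hermite]
    split_ifs with h
    · have habs : ((-1:ℤ)^((n-k)/2) * ((n-k-1)‼:ℤ) * (Nat.choose n k : ℤ)).natAbs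
          = (n-k-1)‼ * Nat.choose n k := by
        rw [Int.natAbs_mul, Int.natAbs_mul]
        simp [Int.natAbs_pow]
      rw [habs]
      have h1 : (n-k-1)‼ ≤ (n-k)! :=
        le_trans (Nat.doubleFactorial_le_factorial _) (Nat.factorial_le (by omega))
      calc (n-k-1)‼ * Nat.choose n k * (k)!
          ≤ (n-k)! * Nat.choose n k * (k)! := by
            exact Nat.mul_le_mul_right _ (Nat.mul_le_mul_right _ h1)
        _ = Nat.choose n k * (k)! * (n-k)! := by ring
        _ = (n)! := Nat.choose_mul_factorial_mul_factorial hkn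
    · simp
  · rw [coeff_hermite_of_lt hkn]
    simp

lemma hermite_bd (n : ℕ) (x : ℝ) :
    |(aeval x (hermite n) : ℝ)| * Real.exp (-(x^2/2)) ≤ ((n+1))! := by
  have hE : (0:ℝ) < Real.exp (-(x^2/2)) := Real.exp_pos _
  have heval : (aeval x (hermite n) : ℝ)
      = ∑ i ∈ Finset.range (n+1), ((hermite n).coeff i : ℝ) * x ^ i := by
    have := Polynomial.aeval_eq_sum_range (R := ℤ) (S := ℝ) (p := hermite n) x
    rw [natDegree_hermite] at this
    simpa [zsmul_eq_mul] using this
  have habs : |(aeval x (hermite n) : ℝ)|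
      ≤ ∑ i ∈ Finset.range (n+1), |((hermite n).coeff i : ℝ)| * |x| ^ i := by
    rw [heval]
    refine le_trans (Finset.abs_sum_le_sum_abs _ _) ?_
    refine Finset.sum_le_sum fun i _ => ?_
    rw [abs_mul, abs_pow]
  calc |(aeval x (hermite n) : ℝ)| * Real.exp (-(x^2/2))
      ≤ (∑ i ∈ Finset.range (n+1), |((hermite n).coeff i : ℝ)| * |x| ^ i)
          * Real.exp (-(x^2/2)) := mul_le_mul_of_nonneg_right habs hE.le
    _ = ∑ i ∈ Finset.range (n+1),
          |((hermite n).coeff i : ℝ)| * (|x| ^ i * Real.exp (-(x^2/2))) := by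
        rw [Finset.sum_mul]; exact Finset.sum_congr rfl fun i _ => by ring
    _ ≤ ∑ i ∈ Finset.range (n+1), ((n)! : ℝ) := by
        refine Finset.sum_le_sum fun i _ => ?_
        have h1 : |((hermite n).coeff i : ℝ)| = (((hermite n).coeff i).natAbs : ℝ) := by
          rw [Nat.cast_natAbs, Int.cast_abs]
        rw [h1]
        calc (((hermite n).coeff i).natAbs : ℝ) * (|x| ^ i * Real.exp (-(x^2/2)))
            ≤ (((hermite n).coeff i).natAbs : ℝ) * (i)! :=
              mul_le_mul_of_nonneg_left (weight_le i x) (Nat.cast_nonneg _)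
          _ ≤ ((n)! : ℝ) := by exact_mod_cast coeff_bd n i
    _ = ((n+1):ℝ) * ((n)!:ℝ) := by rw [Finset.sum_const, Finset.card_range]; push_cast; ring
    _ = (((n+1))! : ℝ) := by rw [Nat.factorial_succ]; push_cast; ring

lemma sqrt_e_le_3 : Real.sqrt (Real.exp 1) ≤ 3 := by
  have h := Real.exp_one_lt_d9
  rw [← pow_le_pow_iff_left₀ (Real.sqrt_nonneg _) (by norm_num : (0:ℝ) ≤ 3) two_ne_zero]
  rw [Real.sq_sqrt (Real.exp_pos 1).le]
  nlinarith

lemma final_arith (k : ℕ) (hk : 1 ≤ k) :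
    Real.sqrt (Real.exp 1) * ((k)! : ℝ)
      ≤ Real.exp ((3 * (k:ℝ) / 2) * Real.log (3 * (k:ℝ) / 2)) := by
  have hy : (0:ℝ) < 3 * (k:ℝ) / 2 := by
    have : (1:ℝ) ≤ (k:ℝ) := by exact_mod_cast hk
    linarith
  rw [mul_comm (3 * (k:ℝ) / 2) (Real.log (3 * (k:ℝ) / 2)), ← Real.rpow_def_of_pos hy]
  rcases eq_or_lt_of_le hk with hk1 | hk2
  · -- k = 1
    subst hk1
    simp only [Nat.cast_one, Nat.factorial_one, Nat.cast_one, mul_one]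
    rw [← pow_le_pow_iff_left₀ (Real.sqrt_nonneg _)
      (Real.rpow_nonneg (by norm_num : (0:ℝ) ≤ 3/2) _) two_ne_zero]
    rw [Real.sq_sqrt (Real.exp_pos 1).le]
    have h2 : ((3/2:ℝ) ^ ((3:ℝ)/2)) ^ (2:ℕ)
        = (3/2:ℝ) ^ (3:ℕ) := by
      rw [← Real.rpow_natCast ((3/2:ℝ) ^ ((3:ℝ)/2)) 2, ← Real.rpow_mul (by norm_num)]
      norm_num
    rw [h2]
    have := Real.exp_one_lt_d9
    nlinarith
  · -- k ≥ 2
    have hk2' : (2:ℝ) ≤ (k:ℝ) := by exact_mod_cast hk2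
    set y : ℝ := 3 * (k:ℝ) / 2 with hydef
    have hy3 : (3:ℝ) ≤ y := by rw [hydef]; linarith
    have hy1 : (1:ℝ) ≤ y := by linarith
    have hfac : ((k)! : ℝ) ≤ (k:ℝ)^k := by exact_mod_cast Nat.factorial_le_pow k
    have hyk : (k:ℝ)^k ≤ y^k := pow_le_pow_left₀ (Nat.cast_nonneg k) (by rw [hydef]; linarith) k
    have h5 : (3:ℝ) ≤ y ^ ((k:ℝ)/2) := by
      have := Real.rpow_le_rpow_of_exponent_le hy1 (by linarith : (1:ℝ) ≤ (k:ℝ)/2)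
      rw [Real.rpow_one] at this
      linarith
    have step1 : Real.sqrt (Real.exp 1) * ((k)! : ℝ) ≤ (y ^ ((k:ℝ)/2)) * y^k := by
      apply mul_le_mul (le_trans sqrt_e_le_3 h5) (le_trans hfac hyk)
        (by positivity) (by positivity)
    have step2 : (y ^ ((k:ℝ)/2)) * y^k = y ^ y := by
      rw [← Real.rpow_natCast y k, ← Real.rpow_add hy]
      congr 1
      rw [hydef]; ring
    rw [← step2]
    exact step1

/-- Φ is infinitely differentiable and for every k ≥ 1 and every real x,
|Φ^{(k)}(x)| ≤ exp((3k/2)·log(3k/2)). -/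
theorem stmt3 :
    ContDiff ℝ (⊤ : ℕ∞) Phi ∧
    ∀ (k : ℕ), 1 ≤ k → ∀ x : ℝ,
      |iteratedDeriv k Phi x| ≤ Real.exp ((3 * (k : ℝ) / 2) * Real.log (3 * (k : ℝ) / 2)) := by
  refine ⟨Phi_contDiff, ?_⟩
  intro k hk x
  obtain ⟨n, rfl⟩ : ∃ n, k = n + 1 := ⟨k - 1, by omega⟩
  rw [iteratedDeriv_Phi n x]
  have habs : |Real.sqrt (Real.exp 1) *
      ((-1:ℝ)^n * aeval x (hermite n) * Real.exp (-(x^2/2)))|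
      = Real.sqrt (Real.exp 1) * (|(aeval x (hermite n) : ℝ)| * Real.exp (-(x^2/2))) := by
    rw [abs_mul, abs_of_nonneg (Real.sqrt_nonneg _), abs_mul, abs_mul, abs_pow, abs_neg,
      abs_one, one_pow, one_mul, abs_of_pos (Real.exp_pos _)]
  rw [habs]
  calc Real.sqrt (Real.exp 1) * (|(aeval x (hermite n) : ℝ)| * Real.exp (-(x^2/2)))
      ≤ Real.sqrt (Real.exp 1) * (((n+1))! : ℝ) :=
        mul_le_mul_of_nonneg_left (hermite_bd n x) (Real.sqrt_nonneg _)
    _ ≤ _ := by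
        have := final_arith (n+1) (by omega)
        push_cast at this ⊢
        exact this
end

section
/- Let p ≥ 1 be an integer, let f : ℝ^d → ℝ be p times continuously differentiable and a pth-order zero-chain, and let x^{(1)} = 0, x^{(2)}, x^{(3)}, … be a pth-order zero-respecting sequence with respect to f. Then for every t with 1 ≤ t ≤ d and every coordinate j with t ≤ j ≤ d, the j-th coordinate of x^{(t)} is zero. -/
/-- The support of the `q`-th derivative of `f` at `x`: the set of coordinates `i` such that
some `q`-th order partial derivative of `f` at `x` involving coordinate `i` is nonzero. -/
def derivSupport (d q : ℕ) (f : EuclideanSpace ℝ (Fin d) → ℝ)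
    (x : EuclideanSpace ℝ (Fin d)) : Set (Fin d) :=
  {i | ∃ m : Fin q → Fin d, (∃ j, m j = i) ∧
        iteratedFDeriv ℝ q f x (fun j => EuclideanSpace.single (m j) 1) ≠ 0}

/-- `f` is a `p`th-order zero-chain (0-based coordinates): whenever the support of `x` is
contained in the first `k` coordinates, the supports of `∇^q f(x)` for `1 ≤ q ≤ p` are
contained in the first `k+1` coordinates. -/
def IsZeroChain (d p : ℕ) (f : EuclideanSpace ℝ (Fin d) → ℝ) : Prop :=
  ∀ (x : EuclideanSpace ℝ (Fin d)) (k : ℕ),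
    (∀ j : Fin d, x j ≠ 0 → (j : ℕ) < k) →
    ∀ q, 1 ≤ q → q ≤ p → ∀ i ∈ derivSupport d q f x, (i : ℕ) < k + 1

/-- The sequence `x 1, x 2, …` is `p`th-order zero-respecting with respect to `f`:
the support of each iterate is contained in the union of the supports of the derivatives
of `f` of order `1,…,p` at the previous iterates. -/
def IsZeroRespecting (d p : ℕ) (f : EuclideanSpace ℝ (Fin d) → ℝ)
    (x : ℕ → EuclideanSpace ℝ (Fin d)) : Prop :=
  ∀ t, 1 ≤ t → ∀ j : Fin d, x t j ≠ 0 →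
    ∃ q, 1 ≤ q ∧ q ≤ p ∧ ∃ s, 1 ≤ s ∧ s < t ∧ j ∈ derivSupport d q f (x s)

/-- If `f : ℝ^d → ℝ` is `p` times continuously differentiable and a `p`th-order zero-chain,
and `x 1 = 0, x 2, …` is a `p`th-order zero-respecting sequence for `f`, then for every
`1 ≤ t ≤ d`, the iterate `x t` vanishes in all coordinates `j` with `t - 1 ≤ j`
(0-based; i.e. the 1-based coordinates `t, …, d` are zero). -/
theorem stmt7 (d p : ℕ) (hp : 1 ≤ p) (f : EuclideanSpace ℝ (Fin d) → ℝ)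
    (hf : ContDiff ℝ p f) (hchain : IsZeroChain d p f)
    (x : ℕ → EuclideanSpace ℝ (Fin d)) (hx1 : x 1 = 0)
    (hzr : IsZeroRespecting d p f x) :
    ∀ t, 1 ≤ t → t ≤ d → ∀ j : Fin d, t - 1 ≤ (j : ℕ) → x t j = 0 := by
  have key : ∀ t, 1 ≤ t → ∀ j : Fin d, t - 1 ≤ (j : ℕ) → x t j = 0 := by
    intro t
    induction t using Nat.strong_induction_on with
    | _ t ih =>
      intro ht j hj
      by_contra hne
      obtain ⟨q, hq1, hqp, s, hs1, hst, hmem⟩ := hzr t ht j hne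
      have hsupp : ∀ i : Fin d, x s i ≠ 0 → (i : ℕ) < s - 1 := by
        intro i hi
        by_contra hlt
        exact hi (ih s hst hs1 i (le_of_not_gt hlt))
      have := hchain (x s) (s - 1) hsupp q hq1 hqp j hmem
      omega
  intro t ht _ j hj
  exact key t ht j hj
end

section
/- Let T ≥ 1 be an integer, R ≥ √T, and α = 1/(5R√T). Let u^{(1)}, …, u^{(T)} ∈ ℝ^d be orthonormal vectors and x^{(1)}, …, x^{(T)} ∈ ℝ^d satisfy ‖x^{(t)}‖ ≤ R for every t. For 0 ≤ t ≤ T let P_t denote the orthogonal projection onto the linear span of {x^{(1)}, u^{(1)}, …, x^{(t)}, u^{(t)}} and let P_t^⊥ = I − P_t. Assume that for every t ≤ T and every j ∈ {t, …, T}, |⟨u^{(j)}, P_{t−1}^⊥ x^{(t)}⟩| ≤ α·‖P_{t−1}^⊥ x^{(t)}‖. Then: (a) for every t ≤ T and every j ∈ {t, …, T}, ‖P_{t−1} u^{(j)}‖² ≤ 2α²(t−1); and (b) for every s ≤ T and every j ∈ {s, …, T}, |⟨u^{(j)}, x^{(s)}⟩| < 1/2. -/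
/-
Write `P_K` for the orthogonal projection onto `K`. Adjoining `v` to `K` adds the projection onto
the line spanned by the residual `r = v - P_K v ⊥ K`, so `‖P_{K ⊔ ℝv} y‖² ≤ ‖P_K y‖² + c²` as soon
as `|⟪y, r⟫| ≤ c ‖r‖`. For `y = u j` the hypothesis gives this with `c = α` when `x t` is adjoined.
When `u t` is adjoined, `|⟪u j, u t - P u t⟫| = |⟪P u j, P u t⟫|` is of order `α² t ≤ 2α/5`, while
`‖u t - P u t‖ ≥ 2/5`; so each step increases `‖P u j‖²` by at most `2α²`, which is (a).
For (b), split `x s = P x s + (x s - P x s)`: `|⟪P u j, x s⟫| ≤ √2 α √T R = √2/5` and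
`|⟪u j, x s - P x s⟫| ≤ α R ≤ 1/5`.
-/

/-- The span of the vectors `x 1, u 1, …, x t, u t`. -/
def spanUpTo {d : ℕ} (u x : ℕ → EuclideanSpace ℝ (Fin d)) (t : ℕ) :
    Submodule ℝ (EuclideanSpace ℝ (Fin d)) :=
  Submodule.span ℝ {v | ∃ s, 1 ≤ s ∧ s ≤ t ∧ (v = x s ∨ v = u s)}

/-- The orthogonal projection `P_t` onto the span of `x 1, u 1, …, x t, u t`
(as a map of the whole space into itself); `P_0 = 0`. -/
noncomputable def projUpTo {d : ℕ} (u x : ℕ → EuclideanSpace ℝ (Fin d)) (t : ℕ)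
    (y : EuclideanSpace ℝ (Fin d)) : EuclideanSpace ℝ (Fin d) :=
  (Submodule.orthogonalProjection (spanUpTo u x t) y : EuclideanSpace ℝ (Fin d))

namespace Submodule

variable {E : Type*} [NormedAddCommGroup E] [InnerProductSpace ℝ E]
  (K : Submodule ℝ E) [K.HasOrthogonalProjection]

theorem span_sub_starProjection_le_orthogonal (v : E) : (ℝ ∙ (v - K.starProjection v)) ≤ Kᗮ :=
  (span_singleton_le_iff_mem _ _).mpr (K.sub_starProjection_mem_orthogonal v)

theorem starProjection_sup_span_singleton (v y : E) [(K ⊔ ℝ ∙ v).HasOrthogonalProjection] :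
    (K ⊔ ℝ ∙ v).starProjection y =
      K.starProjection y + (ℝ ∙ (v - K.starProjection v)).starProjection y := by
  set r := v - K.starProjection v
  have hr := K.span_sub_starProjection_le_orthogonal v
  apply eq_starProjection_of_mem_orthogonal
  · have hrL : r ∈ K ⊔ ℝ ∙ v := sub_mem (mem_sup_right (mem_span_singleton_self v))
      (mem_sup_left (starProjection_apply_mem _ _))
    exact add_mem (mem_sup_left (starProjection_apply_mem _ _))
      ((span_singleton_le_iff_mem _ _).mpr hrL (starProjection_apply_mem _ _))
  · have hK : y - (K.starProjection y + (ℝ ∙ r).starProjection y) ∈ Kᗮ := by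
      rw [sub_add_eq_sub_sub]
      exact sub_mem (K.sub_starProjection_mem_orthogonal y) (hr (starProjection_apply_mem _ _))
    have hyr : inner ℝ (y - (ℝ ∙ r).starProjection y) r = 0 :=
      starProjection_inner_eq_zero _ _ (mem_span_singleton_self r)
    have hKr : inner ℝ (K.starProjection y) r = 0 :=
      (mem_orthogonal K r).mp (hr (mem_span_singleton_self r)) _ (starProjection_apply_mem _ _)
    have hv : v = K.starProjection v + r := by simp [r]
    rw [← inf_orthogonal, mem_inf, mem_orthogonal_singleton_iff_inner_left]
    refine ⟨hK, ?_⟩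
    rw [hv, inner_add_right, (mem_orthogonal' K _).mp hK _ (starProjection_apply_mem _ _),
      sub_add_eq_sub_sub_swap, inner_sub_left, hyr, hKr, sub_zero, zero_add]

theorem norm_starProjection_span_singleton_le {v y : E} {c : ℝ} (hc : 0 ≤ c)
    (h : |inner ℝ y v| ≤ c * ‖v‖) : ‖(ℝ ∙ v).starProjection y‖ ≤ c := by
  rcases eq_or_ne v 0 with rfl | hv
  · simpa using hc
  have hv' : 0 < ‖v‖ := norm_pos_iff.mpr hv
  rw [starProjection_singleton, norm_smul]
  simp only [RCLike.ofReal_real_eq_id, id, norm_div, norm_pow, Real.norm_eq_abs, abs_norm,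
    real_inner_comm y v]
  calc |inner ℝ y v| / ‖v‖ ^ 2 * ‖v‖ = |inner ℝ y v| / ‖v‖ := by field_simp
    _ ≤ c := div_le_of_le_mul₀ hv'.le hc h

theorem norm_starProjection_sup_span_singleton_sq_le {v y : E} {c : ℝ}
    [(K ⊔ ℝ ∙ v).HasOrthogonalProjection] (hc : 0 ≤ c)
    (h : |inner ℝ y (v - K.starProjection v)| ≤ c * ‖v - K.starProjection v‖) :
    ‖(K ⊔ ℝ ∙ v).starProjection y‖ ^ 2 ≤ ‖K.starProjection y‖ ^ 2 + c ^ 2 := by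
  set q := (ℝ ∙ (v - K.starProjection v)).starProjection y
  have hq : ‖q‖ ≤ c := norm_starProjection_span_singleton_le hc h
  have horth : inner ℝ (K.starProjection y) q = 0 :=
    (mem_orthogonal K q).mp (K.span_sub_starProjection_le_orthogonal v
      (starProjection_apply_mem _ _)) _ (starProjection_apply_mem _ _)
  rw [starProjection_sup_span_singleton, norm_add_sq_real, horth, mul_zero, add_zero]
  gcongr

theorem norm_sub_starProjection_sq (v : E) :
    ‖v - K.starProjection v‖ ^ 2 = ‖v‖ ^ 2 - ‖K.starProjection v‖ ^ 2 := by
  rw [norm_sq_eq_add_norm_sq_starProjection v K, starProjection_orthogonal']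
  simp

theorem norm_sub_starProjection_le (v : E) : ‖v - K.starProjection v‖ ≤ ‖v‖ := by
  simpa [starProjection_orthogonal'] using Kᗮ.norm_starProjection_apply_le v

theorem abs_inner_sub_starProjection_le {y v : E} (h : inner ℝ y v = 0) :
    |inner ℝ y (v - K.starProjection v)| ≤ ‖K.starProjection y‖ * ‖K.starProjection v‖ := by
  have hP : inner ℝ y (K.starProjection v) =
      inner ℝ (K.starProjection y) (K.starProjection v) := by
    rw [inner_starProjection_left_eq_right,
      K.starProjection_eq_self_iff.mpr (K.starProjection_apply_mem v)]
  rw [inner_sub_right, h, zero_sub, abs_neg, hP]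
  exact abs_real_inner_le_norm _ _

theorem abs_inner_le_norm_starProjection_mul_add (y v : E) :
    |inner ℝ y v| ≤ ‖K.starProjection y‖ * ‖v‖ + |inner ℝ y (v - K.starProjection v)| :=
  calc |inner ℝ y v| = |inner ℝ (K.starProjection y) v + inner ℝ y (v - K.starProjection v)| := by
        rw [inner_sub_right, inner_starProjection_left_eq_right, add_sub_cancel]
    _ ≤ _ := (abs_add_le _ _).trans (by gcongr; exact abs_real_inner_le_norm _ _)

theorem abs_inner_lt_half_of_norm_starProjection_sq_le {y v : E} {α R T : ℝ} (hα : 0 ≤ α)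
    (hαR : 5 * α * R ≤ 1) (hαRT : 25 * α ^ 2 * R ^ 2 * T = 1)
    (hy : ‖K.starProjection y‖ ^ 2 ≤ 2 * α ^ 2 * T) (hv : ‖v‖ ≤ R)
    (h : |inner ℝ y (v - K.starProjection v)| ≤ α * ‖v - K.starProjection v‖) :
    |inner ℝ y v| < 1 / 2 := by
  have hR : 0 ≤ R := (norm_nonneg v).trans hv
  have hPy : ‖K.starProjection y‖ * R < 3 / 10 := by
    refine lt_of_pow_lt_pow_left₀ 2 (by norm_num) ?_
    calc (‖K.starProjection y‖ * R) ^ 2 = ‖K.starProjection y‖ ^ 2 * R ^ 2 := by ring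
      _ ≤ 2 * α ^ 2 * T * R ^ 2 := by gcongr
      _ < (3 / 10) ^ 2 := by linarith
  calc |inner ℝ y v|
      ≤ ‖K.starProjection y‖ * ‖v‖ + |inner ℝ y (v - K.starProjection v)| :=
        K.abs_inner_le_norm_starProjection_mul_add y v
    _ ≤ ‖K.starProjection y‖ * R + α * R := by
        gcongr
        exact h.trans (by gcongr; exact (K.norm_sub_starProjection_le v).trans hv)
    _ < 1 / 2 := by linarith

-- `25 b ≤ 21` keeps `‖w - P w‖ ≥ 2/5`, hence `|⟪y, w - P w⟫| ≤ b ≤ 2α/5 ≤ α ‖w - P w‖`.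
theorem norm_starProjection_sup_span_unit_sq_le {w y : E} {α b : ℝ}
    [(K ⊔ ℝ ∙ w).HasOrthogonalProjection] (hw : ‖w‖ = 1) (hyw : inner ℝ y w = 0)
    (hy : ‖K.starProjection y‖ ^ 2 ≤ b) (hwb : ‖K.starProjection w‖ ^ 2 ≤ b)
    (hbα : 5 * b ≤ 2 * α) (hb : 25 * b ≤ 21) :
    ‖(K ⊔ ℝ ∙ w).starProjection y‖ ^ 2 ≤ b + α ^ 2 := by
  have hb0 : 0 ≤ b := (sq_nonneg _).trans hy
  have hprod : ‖K.starProjection y‖ * ‖K.starProjection w‖ ≤ b := by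
    nlinarith [norm_nonneg (K.starProjection y), norm_nonneg (K.starProjection w)]
  have hres : 2 / 5 ≤ ‖w - K.starProjection w‖ := by
    have := K.norm_sub_starProjection_sq w
    nlinarith [norm_nonneg (w - K.starProjection w)]
  have hinner : |inner ℝ y (w - K.starProjection w)| ≤ α * ‖w - K.starProjection w‖ := by
    nlinarith [K.abs_inner_sub_starProjection_le hyw]
  linarith [K.norm_starProjection_sup_span_singleton_sq_le (by linarith) hinner]

end Submodule

open Submodule

theorem bounds_of_eq_one_div_mul_sqrt {T : ℕ} {R α : ℝ} (hT : 1 ≤ T) (hR : √(T : ℝ) ≤ R)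
    (hα : α = 1 / (5 * R * √T)) :
    0 < α ∧ 5 * α * T ≤ 1 ∧ 5 * α * R ≤ 1 ∧ 25 * α ^ 2 * R ^ 2 * T = 1 := by
  have hsqrt : 1 ≤ √(T : ℝ) := Real.one_le_sqrt.mpr (by exact_mod_cast hT)
  have hsq : √(T : ℝ) ^ 2 = T := Real.sq_sqrt (Nat.cast_nonneg T)
  have hR0 : 0 < R := by linarith
  have hαRT : 5 * α * R * √T = 1 := by rw [hα]; field_simp
  have hα0 : 0 < α := by rw [hα]; exact one_div_pos.mpr (by positivity)
  refine ⟨hα0, ?_, by nlinarith, ?_⟩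
  · nlinarith [mul_le_mul_of_nonneg_left hR (by positivity : 0 ≤ 5 * α * √(T : ℝ))]
  · linear_combination (5 * α * R * √T + 1) * hαRT - 25 * α ^ 2 * R ^ 2 * hsq

section Sequences

variable {d : ℕ} (u x : ℕ → EuclideanSpace ℝ (Fin d))

theorem projUpTo_apply (t : ℕ) (y : EuclideanSpace ℝ (Fin d)) :
    projUpTo u x t y = (spanUpTo u x t).starProjection y := rfl

theorem spanUpTo_zero : spanUpTo u x 0 = ⊥ := by
  simp only [spanUpTo, span_eq_bot, Set.mem_ofPred_eq]
  omega

theorem spanUpTo_succ (t : ℕ) :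
    spanUpTo u x (t + 1) = spanUpTo u x t ⊔ (ℝ ∙ x (t + 1)) ⊔ (ℝ ∙ u (t + 1)) := by
  have hset : {v | ∃ s, 1 ≤ s ∧ s ≤ t + 1 ∧ (v = x s ∨ v = u s)} =
      {v | ∃ s, 1 ≤ s ∧ s ≤ t ∧ (v = x s ∨ v = u s)} ∪ {x (t + 1)} ∪ {u (t + 1)} := by
    ext v
    simp only [Set.mem_ofPred_eq, Set.mem_union, Set.mem_singleton_iff]
    constructor
    · rintro ⟨s, hs1, hst, hv⟩
      rcases Nat.lt_or_eq_of_le hst with hlt | rfl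
      · exact Or.inl (Or.inl ⟨s, hs1, by omega, hv⟩)
      · tauto
    · rintro ((⟨s, hs1, hst, hv⟩ | hv) | hv)
      · exact ⟨s, hs1, by omega, hv⟩
      · exact ⟨t + 1, by omega, le_rfl, Or.inl hv⟩
      · exact ⟨t + 1, by omega, le_rfl, Or.inr hv⟩
  rw [spanUpTo, spanUpTo, hset, span_union, span_union]

theorem norm_projUpTo_sq_le {T : ℕ} {α : ℝ} (hα : 0 ≤ α) (hαT : 5 * α * T ≤ 1)
    (horth : ∀ i j, 1 ≤ i → i ≤ T → 1 ≤ j → j ≤ T → inner ℝ (u i) (u j) = if i = j then 1 else 0)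
    (hmain : ∀ t, 1 ≤ t → t ≤ T → ∀ j, t ≤ j → j ≤ T →
      |inner ℝ (u j) (x t - projUpTo u x (t - 1) (x t))| ≤ α * ‖x t - projUpTo u x (t - 1) (x t)‖) :
    ∀ n < T, ∀ j, n < j → j ≤ T → ‖projUpTo u x n (u j)‖ ^ 2 ≤ 2 * α ^ 2 * n := by
  intro n
  induction n with
  | zero => intro _ j _ _; simp [projUpTo_apply, spanUpTo_zero]
  | succ n ih =>
    intro hn j hj hjT
    set K := spanUpTo u x n
    have hx : ∀ j, n < j → j ≤ T →
        ‖(K ⊔ ℝ ∙ x (n + 1)).starProjection (u j)‖ ^ 2 ≤ 2 * α ^ 2 * n + α ^ 2 := by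
      intro j hj hjT
      have h := hmain (n + 1) (by omega) hn.le j hj hjT
      have hK := ih (by omega) j hj hjT
      rw [Nat.add_sub_cancel, projUpTo_apply] at h
      rw [projUpTo_apply] at hK
      linarith [K.norm_starProjection_sup_span_singleton_sq_le hα h]
    have hunit : ‖u (n + 1)‖ = 1 := by
      have h := horth (n + 1) (n + 1) (by omega) hn.le (by omega) hn.le
      rwa [if_pos rfl, real_inner_self_eq_norm_sq,
        pow_eq_one_iff_of_nonneg (norm_nonneg _) two_ne_zero] at h
    have horth' : inner ℝ (u j) (u (n + 1)) = 0 := by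
      simpa [show j ≠ n + 1 by omega] using horth j (n + 1) (by omega) hjT (by omega) hn.le
    have hn' : (2 * n + 1 : ℝ) ≤ 2 * T := by exact_mod_cast (by omega : 2 * n + 1 ≤ 2 * T)
    have hα5 : 5 * α * (2 * n + 1) ≤ 2 := by nlinarith
    rw [projUpTo_apply, spanUpTo_succ]
    calc _ ≤ (2 * α ^ 2 * n + α ^ 2) + α ^ 2 :=
          norm_starProjection_sup_span_unit_sq_le _ hunit horth' (hx j (by omega) hjT)
            (hx (n + 1) (by omega) hn.le) (by nlinarith) (by nlinarith)
      _ = 2 * α ^ 2 * ↑(n + 1) := by push_cast; ring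

end Sequences

/-- Let `T ≥ 1`, `R ≥ √T`, `α = 1/(5R√T)`, let `u 1, …, u T` be orthonormal, and
`‖x t‖ ≤ R` for all `1 ≤ t ≤ T`. If `|⟨u j, P_{t−1}^⊥ x t⟩| ≤ α‖P_{t−1}^⊥ x t‖` for all
`t ≤ T` and `j ∈ {t,…,T}`, then (a) `‖P_{t−1} u j‖² ≤ 2α²(t−1)` for all such `t, j`, and
(b) `|⟨u j, x s⟩| < 1/2` for all `s ≤ T` and `j ∈ {s,…,T}`. -/
theorem stmt14 (d T : ℕ) (hT : 1 ≤ T) (R α : ℝ)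
    (hR : Real.sqrt T ≤ R) (hα : α = 1 / (5 * R * Real.sqrt T))
    (u x : ℕ → EuclideanSpace ℝ (Fin d))
    (horth : ∀ i j, 1 ≤ i → i ≤ T → 1 ≤ j → j ≤ T →
      (inner ℝ (u i) (u j) : ℝ) = if i = j then 1 else 0)
    (hbound : ∀ t, 1 ≤ t → t ≤ T → ‖x t‖ ≤ R)
    (hmain : ∀ t, 1 ≤ t → t ≤ T → ∀ j, t ≤ j → j ≤ T →
      |(inner ℝ (u j) (x t - projUpTo u x (t-1) (x t)) : ℝ)| ≤
        α * ‖x t - projUpTo u x (t-1) (x t)‖) :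
    (∀ t, 1 ≤ t → t ≤ T → ∀ j, t ≤ j → j ≤ T →
      ‖projUpTo u x (t-1) (u j)‖ ^ 2 ≤ 2 * α ^ 2 * ((t : ℝ) - 1)) ∧
    (∀ s, 1 ≤ s → s ≤ T → ∀ j, s ≤ j → j ≤ T →
      |(inner ℝ (u j) (x s) : ℝ)| < 1/2) := by
  obtain ⟨hα0, hαT, hαR, hαRT⟩ := bounds_of_eq_one_div_mul_sqrt hT hR hα
  have partA : ∀ t, 1 ≤ t → t ≤ T → ∀ j, t ≤ j → j ≤ T →
      ‖projUpTo u x (t-1) (u j)‖ ^ 2 ≤ 2 * α ^ 2 * ((t : ℝ) - 1) := fun t ht htT j hj hjT => by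
    simpa [Nat.cast_pred ht] using
      norm_projUpTo_sq_le u x hα0.le hαT horth hmain (t - 1) (by omega) j (by omega) hjT
  refine ⟨partA, fun s hs hsT j hj hjT => ?_⟩
  have hA : ‖projUpTo u x (s - 1) (u j)‖ ^ 2 ≤ 2 * α ^ 2 * T := by
    have hsT' : (s : ℝ) ≤ T := by exact_mod_cast hsT
    nlinarith [partA s hs hsT j hj hjT]
  exact abs_inner_lt_half_of_norm_starProjection_sq_le _ hα0.le hαR hαRT hA (hbound s hs hsT)
    (hmain s hs hsT j hj hjT)
end
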